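/- arXiv:2303.13059 — 2 statements merged into one kernel-verified Lean document; each statement's English description precedes it below -/
import Mathlib

section
/- The dynamic-key ElGamal ciphertext update preserves correctness: if ct_t = (c₁, c₂) encrypts m under secret key s (i.e., c₁^{-s}c₂ = m mod p), the key is updated to s' = s + d mod q with new public key component h' = h·g^d, and the ciphertext is updated to ct_{t+1} = (c₁g^r mod p, (c₁g^r)^d · c₂ · h^r mod p) for any r ∈ Z_q, then ct_{t+1} decrypts to m under the new secret key s'. -/
/-- Dynamic-key ElGamal ciphertext update preserves correctness. -/
theorem dyn_elgamal_update_correct (p q : ℕ) (hp : p.Prime) (hq : q.Prime)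
    (g : (ZMod p)ˣ) (hg : orderOf g = q)
    (s s' r : ZMod q) (m c₁ c₂ : (ZMod p)ˣ)
    (hc₁ : c₁ ∈ Subgroup.zpowers g)
    (henc : (c₁ ^ s.val)⁻¹ * c₂ = m) :
    ((c₁ * g ^ r.val) ^ s'.val)⁻¹ *
      ((c₁ * g ^ r.val) ^ (s' - s).val * c₂ * (g ^ s.val) ^ r.val) = m := by
  haveI := Fact.mk hq
  obtain ⟨k, hk⟩ := hc₁
  subst henc
  have key : ∀ A B : ℤ, (A : ZMod q) = B → g ^ A = g ^ B := by
    intro A B h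
    rw [zpow_eq_zpow_iff_modEq, hg]
    exact (ZMod.intCast_eq_intCast_iff' A B q).mp (by exact_mod_cast h)
  simp only [← hk, ← zpow_natCast, ← zpow_add, ← zpow_mul, ← zpow_neg]
  rw [mul_assoc _ c₂, mul_comm c₂, ← mul_assoc, ← zpow_add, ← mul_assoc, ← zpow_add]
  congr 1
  apply key
  push_cast [ZMod.natCast_val, ZMod.cast_id]
  ring
end

section
/- The modified evaluation and decryption algorithms for dynamic-key ElGamal are correct across different key epochs: for public keys pk_t with secret s and pk_{t+k} with secret s' (both sharing p, q, g), and plaintexts m₁, m₂, if c₁ = g^r, c₂ = g^{r'}, c₃ = m₁m₂g^{sr + s'r'} (all mod p) is the output of the modified evaluation on Enc(pk_t, m₁) and Enc(pk_{t+k}, m₂), then the two-stage decryption — first computing c̃ = c₂^{-s'}c₃ mod p, then c₁^{-s}c̃ mod p — yields m₁m₂ mod p. -/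
/-- The modified evaluation/decryption of dynamic-key ElGamal is correct
across different key epochs. -/
theorem dyn_elgamal_modified_correct (p q : ℕ) (hp : p.Prime) (hq : q.Prime)
    (g : (ZMod p)ˣ) (hg : orderOf g = q)
    (s s' r r' : ZMod q) (m₁ m₂ : (ZMod p)ˣ)
    (hm₁ : m₁ ∈ Subgroup.zpowers g) (hm₂ : m₂ ∈ Subgroup.zpowers g)
    (c₁ c₂ c₃ : (ZMod p)ˣ)
    (hc₁ : c₁ = g ^ r.val) (hc₂ : c₂ = g ^ r'.val)
    (hc₃ : c₃ = m₁ * m₂ * g ^ (s.val * r.val + s'.val * r'.val)) :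
    (c₁ ^ s.val)⁻¹ * ((c₂ ^ s'.val)⁻¹ * c₃) = m₁ * m₂ := by
  subst hc₁ hc₂ hc₃
  rw [← pow_mul, ← pow_mul, pow_add]
  rw [mul_comm r.val s.val, mul_comm r'.val s'.val]
  group
  rw [mul_assoc, mul_assoc, mul_comm m₂, ← mul_assoc m₁, mul_comm m₁, mul_assoc,
    ← mul_assoc, ← zpow_add]
  simp
end
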